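/- Let Z = [τ₁, τ₂, τ₃] be a bicyclic bitrade in τ-representation on the set Γ. Then Z is τ-isomorphic to Z⁻¹ = [τ₁⁻¹, τ₂⁻¹, τ₂τ₁]: there exists a permutation θ of Γ with θ⁻¹τ₁θ = τ₁⁻¹, θ⁻¹τ₂θ = τ₂⁻¹ and θ⁻¹τ₃θ = τ₂τ₁. -/
import Mathlib


/-- The set of points moved by a permutation. -/
def mov (σ : Equiv.Perm ℕ) : Set ℕ := {x | σ x ≠ x}

/-- The underlying set `Γ = mov(τ₁) ∪ mov(τ₂) ∪ mov(τ₃)` of a triple of permutations. -/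
def Gam (τ : Fin 3 → Equiv.Perm ℕ) : Set ℕ := mov (τ 0) ∪ mov (τ 1) ∪ mov (τ 2)

/-- A bitrade in τ-representation: a triple `[τ₁, τ₂, τ₃]` of permutations of the
finite set `Γ = mov(τ₁) ∪ mov(τ₂) ∪ mov(τ₃)` (all permutations composed left to
right) satisfying (T1) `τ₁τ₂τ₃ = 1`, (T2) any cycle of `τ_i` and any cycle of `τ_j`
(`i < j`) move at most one common point, and (T3) each `τ_i` is fixed-point-free
on `Γ`. -/
structure IsTauRep (τ : Fin 3 → Equiv.Perm ℕ) : Prop where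
  fin : (Gam τ).Finite
  t1 : ∀ x, τ 2 (τ 1 (τ 0 x)) = x
  t2 : ∀ i j : Fin 3, i < j → ∀ x y : ℕ, x ≠ y →
    ¬((τ i).SameCycle x y ∧ (τ j).SameCycle x y)
  t3 : ∀ i : Fin 3, ∀ x ∈ Gam τ, τ i x ≠ x

/-- The same-cycle setoid on the set of points moved by `σ`;
its classes are the (nontrivial) cycles of `σ`. -/
def cycSetoidOn (σ : Equiv.Perm ℕ) : Setoid (mov σ) :=
  ⟨fun a b => σ.SameCycle a.1 b.1,
    ⟨fun a => Equiv.Perm.SameCycle.refl σ a.1,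
     fun h => h.symm, fun h h' => h.trans h'⟩⟩

/-- `zc σ` is the number of cycles of `σ`. -/
noncomputable def zc (σ : Equiv.Perm ℕ) : ℕ := Nat.card (Quotient (cycSetoidOn σ))

/-- (T4): the group `⟨τ₁, τ₂, τ₃⟩` acts transitively on `Γ`. -/
def TransOn (τ : Fin 3 → Equiv.Perm ℕ) : Prop :=
  ∀ x ∈ Gam τ, ∀ y ∈ Gam τ,
    ∃ g ∈ Subgroup.closure ({τ 0, τ 1, τ 2} : Set (Equiv.Perm ℕ)), g x = y

/-- A spherical bitrade in τ-representation: (T4) holds and the genus defined by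
Euler's formula `order = size + 2 - 2g` is zero. -/
def Spherical (τ : Fin 3 → Equiv.Perm ℕ) : Prop :=
  IsTauRep τ ∧ TransOn τ ∧
    zc (τ 0) + zc (τ 1) + zc (τ 2) = Nat.card (Gam τ) + 2

/-- A bitrade in τ-representation is bicyclic if some `τ_j` has exactly two cycles. -/
def Bicyclic (τ : Fin 3 → Equiv.Perm ℕ) : Prop := ∃ j : Fin 3, zc (τ j) = 2

/-- The inverse `Z⁻¹ = [τ₁⁻¹, τ₂⁻¹, τ₂τ₁]` of a bitrade in τ-representation
(`τ₂τ₁`, composed left to right, is `τ 0 * τ 1` in Lean's convention). -/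
def ZInv (τ : Fin 3 → Equiv.Perm ℕ) : Fin 3 → Equiv.Perm ℕ :=
  ![(τ 0)⁻¹, (τ 1)⁻¹, τ 0 * τ 1]

/-- `SlideRel τ x j u τ'` says that `τ'` is the result of the slide expansion of
`τ` at the point `x ∈ Γ` in direction `j`, with new point `u ∉ Γ`.  Writing
`k = j+1`, `l = j+2`, `w = xτ_j`, `a = xτ_j⁻¹`, `b = wτ_j`, `z = xτ_k`,
`y = wτ_l⁻¹`, the preconditions are that the `τ_j`-cycle through `x` has length at
least 3 and that the `τ_k`-cycle through `x` and the `τ_l`-cycle through `w` have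
no common point; the new permutations send `a ↦ u ↦ b`, `x ↦ w ↦ x` (direction `j`),
insert `u` after `x` (direction `k`) and insert `u` between `y` and `w`
(direction `l`), agreeing with the old ones elsewhere. -/
def SlideRel (τ : Fin 3 → Equiv.Perm ℕ) (x : ℕ) (j : Fin 3) (u : ℕ)
    (τ' : Fin 3 → Equiv.Perm ℕ) : Prop :=
  x ∈ Gam τ ∧ u ∉ Gam τ ∧
  τ j x ≠ x ∧ τ j (τ j x) ≠ x ∧
  (∀ p : ℕ, (τ (j + 1)).SameCycle x p → (τ (j + 2)).SameCycle (τ j x) p → False) ∧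
  (τ' j ((τ j)⁻¹ x) = u ∧ τ' j u = τ j (τ j x) ∧
    τ' j x = τ j x ∧ τ' j (τ j x) = x ∧
    ∀ p : ℕ, p ≠ (τ j)⁻¹ x → p ≠ u → p ≠ x → p ≠ τ j x → τ' j p = τ j p) ∧
  (τ' (j + 1) x = u ∧ τ' (j + 1) u = τ (j + 1) x ∧
    ∀ p : ℕ, p ≠ x → p ≠ u → τ' (j + 1) p = τ (j + 1) p) ∧
  (τ' (j + 2) ((τ (j + 2))⁻¹ (τ j x)) = u ∧ τ' (j + 2) u = τ j x ∧
    ∀ p : ℕ, p ≠ (τ (j + 2))⁻¹ (τ j x) → p ≠ u → τ' (j + 2) p = τ (j + 2) p)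

-- helpers
lemma mem_Gam' (Z : Fin 3 → Equiv.Perm ℕ) (i : Fin 3) {x : ℕ} (hx : x ∈ mov (Z i)) :
    x ∈ Gam Z := by
  fin_cases i
  · exact Or.inl (Or.inl hx)
  · exact Or.inl (Or.inr hx)
  · exact Or.inr hx

lemma mov_apply {σ : Equiv.Perm ℕ} {x : ℕ} (hx : x ∈ mov σ) : σ x ∈ mov σ :=
  fun hc => hx (σ.injective hc)

lemma sq_lemma (Z : Fin 3 → Equiv.Perm ℕ) (h : IsTauRep Z) (j : Fin 3)
    (hj : zc (Z j) = 2) (i : Fin 3) (hij : i ≠ j) : Z i * Z i = 1 := by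
  ext x
  simp only [Equiv.Perm.coe_mul, Function.comp_apply, Equiv.Perm.coe_one, id_eq]
  by_cases hx : Z i x = x
  · rw [hx, hx]
  · by_contra hy
    have hxm : x ∈ mov (Z i) := hx
    have hbm : Z i x ∈ mov (Z i) := mov_apply hxm
    have hcm : Z i (Z i x) ∈ mov (Z i) := mov_apply hbm
    have hxG : x ∈ Gam Z := mem_Gam' Z i hxm
    have hbG : Z i x ∈ Gam Z := mem_Gam' Z i hbm
    have hcG : Z i (Z i x) ∈ Gam Z := mem_Gam' Z i hcm
    -- all in mov (Z j)
    have hxj : x ∈ mov (Z j) := h.t3 j x hxG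
    have hbj : Z i x ∈ mov (Z j) := h.t3 j _ hbG
    have hcj : Z i (Z i x) ∈ mov (Z j) := h.t3 j _ hcG
    -- distinctness
    have hbx : Z i x ≠ x := hx
    have hcb : Z i (Z i x) ≠ Z i x := h.t3 i _ hbG
    have hcx : Z i (Z i x) ≠ x := hy
    -- same cycle under Z i
    have sxb : (Z i).SameCycle x (Z i x) := ⟨1, by simp⟩
    have sbc : (Z i).SameCycle (Z i x) (Z i (Z i x)) := ⟨1, by simp⟩
    have sxc : (Z i).SameCycle x (Z i (Z i x)) := sxb.trans sbc
    -- key contradiction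
    have key : ∀ p q : ℕ, p ≠ q → (Z i).SameCycle p q → (Z j).SameCycle p q → False := by
      intro p q hpq hi hjc
      rcases lt_or_gt_of_ne hij with hlt | hgt
      · exact h.t2 i j hlt p q hpq ⟨hi, hjc⟩
      · exact h.t2 j i hgt p q hpq ⟨hjc, hi⟩
    -- pigeonhole on two cycles of Z j
    have hfin : (mov (Z j)).Finite := h.fin.subset (fun y hy => mem_Gam' Z j hy)
    have : Finite (mov (Z j)) := hfin.to_subtype
    set Q := Quotient (cycSetoidOn (Z j))
    have hQ : Nat.card Q = 2 := hj
    have hQfin : Finite Q := Quotient.finite _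
    set A : mov (Z j) := ⟨x, hxj⟩
    set B : mov (Z j) := ⟨Z i x, hbj⟩
    set C : mov (Z j) := ⟨Z i (Z i x), hcj⟩
    have hsc : ∀ (P R : mov (Z j)), (⟦P⟧ : Q) = ⟦R⟧ → (Z j).SameCycle P.1 R.1 :=
      fun P R hPR => Quotient.exact hPR
    by_cases e1 : (⟦A⟧ : Q) = ⟦B⟧
    · exact key x (Z i x) (Ne.symm hbx) sxb (hsc A B e1)
    by_cases e2 : (⟦A⟧ : Q) = ⟦C⟧
    · exact key x (Z i (Z i x)) (Ne.symm hcx) sxc (hsc A C e2)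
    by_cases e3 : (⟦B⟧ : Q) = ⟦C⟧
    · exact key (Z i x) (Z i (Z i x)) (Ne.symm hcb) sbc (hsc B C e3)
    · -- three distinct classes in a 2-element type: contradiction
      have hinj : Function.Injective (![⟦A⟧, ⟦B⟧, ⟦C⟧] : Fin 3 → Q) := by
        intro s t hst
        fin_cases s <;> fin_cases t <;> simp_all <;>
          first
          | exact e1 (Quotient.exact hst)
          | exact e2 (Quotient.exact hst)
          | exact e3 (Quotient.exact hst)
          | exact e1 (Quotient.exact hst.symm)
          | exact e2 (Quotient.exact hst.symm)
          | exact e3 (Quotient.exact hst.symm)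
      have := Nat.card_le_card_of_injective _ hinj
      simp [hQ, Nat.card_eq_fintype_card] at this

lemma conj_ab {G : Type*} [Group G] (a b : G) (ha : a * a = 1) (hb : b * b = 1) :
    a * (a * b) * a⁻¹ = (a * b)⁻¹ := by
  have ia : a⁻¹ = a := inv_eq_of_mul_eq_one_right ha
  have ib : b⁻¹ = b := inv_eq_of_mul_eq_one_right hb
  rw [mul_inv_rev, ia, ib, ← mul_assoc a a b, ha, one_mul]

lemma conj_ba {G : Type*} [Group G] (a b : G) (ha : a * a = 1) (hb : b * b = 1) :
    a * (b * a) * a⁻¹ = (b * a)⁻¹ := by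
  have ia : a⁻¹ = a := inv_eq_of_mul_eq_one_right ha
  have ib : b⁻¹ = b := inv_eq_of_mul_eq_one_right hb
  rw [mul_inv_rev, ia, ib, mul_assoc a (b*a) a, mul_assoc b a a, ha, mul_one]

lemma third_goal (Z : Fin 3 → Equiv.Perm ℕ) (θ : Equiv.Perm ℕ)
    (ht : Z 2 * Z 1 * Z 0 = 1)
    (h0 : θ * Z 0 * θ⁻¹ = (Z 0)⁻¹) (h1 : θ * Z 1 * θ⁻¹ = (Z 1)⁻¹) :
    θ * Z 2 * θ⁻¹ = Z 0 * Z 1 := by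
  have hz2 : Z 2 = (Z 0)⁻¹ * (Z 1)⁻¹ := by
    have h' : Z 2 = (Z 2 * Z 1 * Z 0) * ((Z 0)⁻¹ * (Z 1)⁻¹) := by group
    rw [ht, one_mul] at h'; exact h'
  have expand : θ * Z 2 * θ⁻¹ = (θ * Z 0 * θ⁻¹)⁻¹ * (θ * Z 1 * θ⁻¹)⁻¹ := by
    rw [hz2]; group
  rw [expand, h0, h1, inv_inv, inv_inv]


/-- Every bicyclic bitrade `Z = [τ₁, τ₂, τ₃]` in τ-representation
is τ-isomorphic to its inverse `Z⁻¹ = [τ₁⁻¹, τ₂⁻¹, τ₂τ₁]`: there is a permutation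
`θ` with `θ⁻¹τ₁θ = τ₁⁻¹`, `θ⁻¹τ₂θ = τ₂⁻¹`, `θ⁻¹τ₃θ = τ₂τ₁` (left-to-right
conjugation `θ⁻¹σθ` is `θ * σ * θ⁻¹` in Lean's convention, and the left-to-right
product `τ₂τ₁` is `τ 0 * τ 1`). -/
theorem bicyclic_iso_inverse (Z : Fin 3 → Equiv.Perm ℕ)
    (h : IsTauRep Z) (hb : Bicyclic Z) :
    ∃ θ : Equiv.Perm ℕ,
      θ * Z 0 * θ⁻¹ = (Z 0)⁻¹ ∧
      θ * Z 1 * θ⁻¹ = (Z 1)⁻¹ ∧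
      θ * Z 2 * θ⁻¹ = Z 0 * Z 1 := by
  have ht : Z 2 * Z 1 * Z 0 = 1 := by
    ext x
    simp only [Equiv.Perm.coe_mul, Function.comp_apply, Equiv.Perm.coe_one, id_eq]
    exact h.t1 x
  obtain ⟨j, hj⟩ := hb
  fin_cases j
  · -- Z 1 and Z 2 are involutions, θ = Z 1
    have i1 : Z 1 * Z 1 = 1 := sq_lemma Z h 0 hj 1 (by decide)
    have i2 : Z 2 * Z 2 = 1 := sq_lemma Z h 0 hj 2 (by decide)
    have hz0 : Z 0 = Z 1 * Z 2 := by
      have h' : Z 0 = (Z 1)⁻¹ * (Z 2)⁻¹ * (Z 2 * Z 1 * Z 0) := by group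
      rw [ht, mul_one, inv_eq_of_mul_eq_one_right i1, inv_eq_of_mul_eq_one_right i2] at h'
      exact h'
    refine ⟨Z 1, ?_, ?_, ?_⟩
    · rw [hz0]; exact conj_ab (Z 1) (Z 2) i1 i2
    · rw [i1, one_mul, inv_eq_of_mul_eq_one_right i1]
    · exact third_goal Z (Z 1) ht (by rw [hz0]; exact conj_ab (Z 1) (Z 2) i1 i2)
        (by rw [i1, one_mul, inv_eq_of_mul_eq_one_right i1])
  · -- Z 0 and Z 2 are involutions, θ = Z 0
    have i0 : Z 0 * Z 0 = 1 := sq_lemma Z h 1 hj 0 (by decide)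
    have i2 : Z 2 * Z 2 = 1 := sq_lemma Z h 1 hj 2 (by decide)
    have hz1 : Z 1 = Z 2 * Z 0 := by
      have h' : Z 1 = (Z 2)⁻¹ * (Z 2 * Z 1 * Z 0) * (Z 0)⁻¹ := by group
      rw [ht, mul_one, inv_eq_of_mul_eq_one_right i0, inv_eq_of_mul_eq_one_right i2] at h'
      exact h'
    have g0 : Z 0 * Z 0 * (Z 0)⁻¹ = (Z 0)⁻¹ := by rw [i0, one_mul]
    have g1 : Z 0 * Z 1 * (Z 0)⁻¹ = (Z 1)⁻¹ := by
      rw [hz1]; exact conj_ba (Z 0) (Z 2) i0 i2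
    exact ⟨Z 0, g0, g1, third_goal Z (Z 0) ht g0 g1⟩
  · -- Z 0 and Z 1 are involutions, θ = 1
    have i0 : Z 0 * Z 0 = 1 := sq_lemma Z h 2 hj 0 (by decide)
    have i1 : Z 1 * Z 1 = 1 := sq_lemma Z h 2 hj 1 (by decide)
    have g0 : (1 : Equiv.Perm ℕ) * Z 0 * 1⁻¹ = (Z 0)⁻¹ := by
      rw [one_mul, inv_one, mul_one, inv_eq_of_mul_eq_one_right i0]
    have g1 : (1 : Equiv.Perm ℕ) * Z 1 * 1⁻¹ = (Z 1)⁻¹ := by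
      rw [one_mul, inv_one, mul_one, inv_eq_of_mul_eq_one_right i1]
    exact ⟨1, g0, g1, third_goal Z 1 ht g0 g1⟩
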